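/- Let f be convex, C², semi-strongly self-concordant with constant L_semi, with positive definite Hessians, and let L ≥ L_semi. Define S(x) = argmin_y { f(x) + ⟨∇f(x), y−x⟩ + (1/2)⟨∇²f(x)(y−x), y−x⟩ + (L/6)‖y−x‖_x³ }. Then for every x: f(S(x)) ≤ min_y { f(y) + (L/3)‖y−x‖_x³ }. -/

import Mathlib

/-!
Semi-strong self-concordance makes `t ↦ ⟪∇²f(x + t h) h, h⟫` deviate from its value at `0` by at
most `L_semi ‖h‖_x³ t`, so the second-order Taylor expansion of `f` along `[x, y]` is accurate up
to `(L_semi/6)‖y - x‖_x³` in both directions. Then `f (S x)` is at most the regularized model at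
`S x` (upper bound, `L_semi ≤ L`), which is at most the model at any `y`, which in turn is at most
`f y + (L_semi/6 + L/6)‖y - x‖_x³` (lower bound).
-/

open RealInnerProductSpace Set

lemma sub_taylor_two_le_of_hasDerivAt {φ p ψ : ℝ → ℝ} {K : ℝ}
    (hφ : ∀ t, HasDerivAt φ (p t) t) (hp : ∀ t, HasDerivAt p (ψ t) t)
    (hψ : ∀ t ∈ Icc (0 : ℝ) 1, ψ t - ψ 0 ≤ K * t) :
    φ 1 - (φ 0 + p 0 + ψ 0 / 2) ≤ K / 6 := by
  -- `g` below has `g 0 = g' 0 = 0` and `g'' ≤ 0` on `[0, 1]`, so `g' ≤ 0` and then `g 1 ≤ 0`.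
  have hIcc : (0 : ℝ) ∈ Icc (0 : ℝ) 1 := left_mem_Icc.2 zero_le_one
  set g' : ℝ → ℝ := fun t => p t - (p 0 + t * ψ 0 + K / 2 * t ^ 2)
  have hg'_deriv : ∀ t, HasDerivAt g' (ψ t - (ψ 0 + K * t)) t := fun t => by
    refine ((hp t).sub ((((hasDerivAt_id t).mul_const (ψ 0)).const_add (p 0)).add
      ((hasDerivAt_pow 2 t).const_mul (K / 2)))).congr_deriv ?_
    push_cast; ring
  have hg'_anti : AntitoneOn g' (Icc 0 1) :=
    antitoneOn_of_hasDerivWithinAt_nonpos (convex_Icc 0 1)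
      (HasDerivAt.continuousOn fun t _ => hg'_deriv t)
      (fun t _ => (hg'_deriv t).hasDerivWithinAt)
      (fun t ht => by
        rw [interior_Icc] at ht
        linarith [hψ t (Ioo_subset_Icc_self ht)])
  set g : ℝ → ℝ := fun t => φ t - (φ 0 + t * p 0 + t ^ 2 / 2 * ψ 0 + K / 6 * t ^ 3)
  have hg_deriv : ∀ t, HasDerivAt g (g' t) t := fun t => by
    refine ((hφ t).sub (((((hasDerivAt_id t).mul_const (p 0)).const_add (φ 0)).add
      (((hasDerivAt_pow 2 t).div_const 2).mul_const (ψ 0))).add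
      ((hasDerivAt_pow 3 t).const_mul (K / 6)))).congr_deriv ?_
    simp only [g']; push_cast; ring
  have hg_anti : AntitoneOn g (Icc 0 1) :=
    antitoneOn_of_hasDerivWithinAt_nonpos (convex_Icc 0 1)
      (HasDerivAt.continuousOn fun t _ => hg_deriv t)
      (fun t _ => (hg_deriv t).hasDerivWithinAt)
      (fun t ht => by
        have ht' := interior_subset ht
        simpa [g'] using hg'_anti hIcc ht' ht'.1)
  have hg_one := hg_anti hIcc (right_mem_Icc.2 zero_le_one) zero_le_one
  simp only [g] at hg_one
  linarith

lemma abs_sub_taylor_two_le_of_hasDerivAt {φ p ψ : ℝ → ℝ} {K : ℝ}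
    (hφ : ∀ t, HasDerivAt φ (p t) t) (hp : ∀ t, HasDerivAt p (ψ t) t)
    (hψ : ∀ t ∈ Icc (0 : ℝ) 1, |ψ t - ψ 0| ≤ K * t) :
    |φ 1 - (φ 0 + p 0 + ψ 0 / 2)| ≤ K / 6 := by
  have upper := sub_taylor_two_le_of_hasDerivAt hφ hp fun t ht => (abs_le.1 (hψ t ht)).2
  have lower := sub_taylor_two_le_of_hasDerivAt (fun t => (hφ t).neg) (fun t => (hp t).neg)
    fun t ht => by linarith [(abs_le.1 (hψ t ht)).1]
  simp only [Pi.neg_apply] at lower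
  rw [abs_le]
  constructor <;> linarith

variable {E : Type*} [NormedAddCommGroup E] [InnerProductSpace ℝ E]

def SemiStronglySelfConcordant (hess : E → E →L[ℝ] E) (L : ℝ) : Prop :=
  ∀ x y u v, |⟪(hess y - hess x) u, v⟫| ≤
    L * Real.sqrt ⟪hess x (y - x), y - x⟫ * (Real.sqrt ⟪hess x u, u⟫ * Real.sqrt ⟪hess x v, v⟫)

lemma SemiStronglySelfConcordant.abs_inner_add_smul_sub_le {hess : E → E →L[ℝ] E} {L : ℝ}
    (hssc : SemiStronglySelfConcordant hess L) (x h : E) {t : ℝ} (ht : 0 ≤ t) :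
    |⟪hess (x + t • h) h, h⟫ - ⟪hess x h, h⟫| ≤ L * Real.sqrt ⟪hess x h, h⟫ ^ 3 * t := by
  have hsqrt : Real.sqrt ⟪hess x (t • h), t • h⟫ = t * Real.sqrt ⟪hess x h, h⟫ := by
    rw [map_smul, real_inner_smul_left, real_inner_smul_right, ← mul_assoc, ← sq,
      Real.sqrt_mul (sq_nonneg t), Real.sqrt_sq ht]
  have hbound := hssc x (x + t • h) h h
  rw [add_sub_cancel_left, hsqrt, sub_apply, inner_sub_left] at hbound
  linarith

variable [CompleteSpace E]

lemma hasDerivAt_comp_add_smul {f : E → ℝ} (hf : Differentiable ℝ f) (x h : E) (t : ℝ) :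
    HasDerivAt (fun t : ℝ => f (x + t • h)) ⟪gradient f (x + t • h), h⟫ t := by
  have hline : HasDerivAt (fun t : ℝ => x + t • h) h t := by
    simpa using ((hasDerivAt_id t).smul_const h).const_add x
  simpa [Function.comp_def] using
    (hf (x + t • h)).hasGradientAt.hasFDerivAt.comp_hasDerivAt t hline

lemma hasDerivAt_inner_gradient_comp_add_smul {f : E → ℝ} {hess : E → E →L[ℝ] E}
    (hhess : ∀ x, HasFDerivAt (gradient f) (hess x) x) (x h : E) (t : ℝ) :
    HasDerivAt (fun t : ℝ => ⟪gradient f (x + t • h), h⟫) ⟪hess (x + t • h) h, h⟫ t := by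
  have hline : HasDerivAt (fun t : ℝ => x + t • h) h t := by
    simpa using ((hasDerivAt_id t).smul_const h).const_add x
  simpa using ((hhess (x + t • h)).comp_hasDerivAt t hline).inner ℝ (hasDerivAt_const t h)

lemma SemiStronglySelfConcordant.abs_sub_taylor_two_le {f : E → ℝ} {hess : E → E →L[ℝ] E}
    {L : ℝ} (hssc : SemiStronglySelfConcordant hess L) (hf : Differentiable ℝ f)
    (hhess : ∀ x, HasFDerivAt (gradient f) (hess x) x) (x y : E) :
    |f y - (f x + ⟪gradient f x, y - x⟫ + 1 / 2 * ⟪hess x (y - x), y - x⟫)| ≤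
      L / 6 * Real.sqrt ⟪hess x (y - x), y - x⟫ ^ 3 := by
  have htaylor := abs_sub_taylor_two_le_of_hasDerivAt (hasDerivAt_comp_add_smul hf x (y - x))
    (hasDerivAt_inner_gradient_comp_add_smul hhess x (y - x))
    fun t ht => by
      simpa only [zero_smul, add_zero] using hssc.abs_inner_add_smul_sub_le x (y - x) ht.1
  simp only [zero_smul, add_zero, one_smul, add_sub_cancel] at htaylor
  convert htaylor using 2 <;> ring

theorem one_step_global_decrease_general {d : ℕ}
    (f : EuclideanSpace ℝ (Fin d) → ℝ)
    (hess : EuclideanSpace ℝ (Fin d) → EuclideanSpace ℝ (Fin d) →L[ℝ] EuclideanSpace ℝ (Fin d))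
    (Lsemi L : ℝ) (hLL : Lsemi ≤ L)
    (hf : ContDiff ℝ 2 f)
    (hhess : ∀ x, HasFDerivAt (gradient f) (hess x) x)
    -- semi-strong self-concordance (operator-norm form, as a bilinear bound)
    (hssc : ∀ x y u v, |⟪(hess y - hess x) u, v⟫| ≤
      Lsemi * Real.sqrt ⟪hess x (y - x), y - x⟫ *
        (Real.sqrt ⟪hess x u, u⟫ * Real.sqrt ⟪hess x v, v⟫))
    -- the cubically regularized model at x
    (Q : EuclideanSpace ℝ (Fin d) → EuclideanSpace ℝ (Fin d) → ℝ)
    (hQ : ∀ x y, Q x y = f x + ⟪gradient f x, y - x⟫ + 1 / 2 * ⟪hess x (y - x), y - x⟫ +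
      L / 6 * Real.sqrt ⟪hess x (y - x), y - x⟫ ^ 3) :
    ∀ x s, (∀ y, Q x s ≤ Q x y) →
      ∀ y, f s ≤ f y + L / 3 * Real.sqrt ⟪hess x (y - x), y - x⟫ ^ 3 := by
  intro x s hmin y
  have hmodel := SemiStronglySelfConcordant.abs_sub_taylor_two_le hssc
    (hf.differentiable (by norm_num)) hhess x
  have hs := (abs_le.1 (hmodel s)).2
  have hy := (abs_le.1 (hmodel y)).1
  have hQsy := hmin y
  rw [hQ, hQ] at hQsy
  have hLs := mul_le_mul_of_nonneg_right hLL (pow_nonneg (Real.sqrt_nonneg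
    ⟪hess x (s - x), s - x⟫) 3)
  have hLy := mul_le_mul_of_nonneg_right hLL (pow_nonneg (Real.sqrt_nonneg
    ⟪hess x (y - x), y - x⟫) 3)
  linarith

theorem one_step_global_decrease {d : ℕ}
    (f : EuclideanSpace ℝ (Fin d) → ℝ)
    (hess : EuclideanSpace ℝ (Fin d) → EuclideanSpace ℝ (Fin d) →L[ℝ] EuclideanSpace ℝ (Fin d))
    (Lsemi L : ℝ) (hLsemi : 0 ≤ Lsemi) (hLL : Lsemi ≤ L)
    (hconv : ConvexOn ℝ Set.univ f)
    (hf : ContDiff ℝ 2 f)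
    (hhess : ∀ x, HasFDerivAt (gradient f) (hess x) x)
    (hpd : ∀ x v, v ≠ 0 → 0 < ⟪hess x v, v⟫)
    -- semi-strong self-concordance (operator-norm form, as a bilinear bound)
    (hssc : ∀ x y u v, |⟪(hess y - hess x) u, v⟫| ≤
      Lsemi * Real.sqrt ⟪hess x (y - x), y - x⟫ *
        (Real.sqrt ⟪hess x u, u⟫ * Real.sqrt ⟪hess x v, v⟫))
    -- the cubically regularized model at x
    (Q : EuclideanSpace ℝ (Fin d) → EuclideanSpace ℝ (Fin d) → ℝ)
    (hQ : ∀ x y, Q x y = f x + ⟪gradient f x, y - x⟫ + 1 / 2 * ⟪hess x (y - x), y - x⟫ +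
      L / 6 * Real.sqrt ⟪hess x (y - x), y - x⟫ ^ 3) :
    ∀ x s, (∀ y, Q x s ≤ Q x y) →
      ∀ y, f s ≤ f y + L / 3 * Real.sqrt ⟪hess x (y - x), y - x⟫ ^ 3 :=
  one_step_global_decrease_general f hess Lsemi L hLL hf hhess hssc Q hQ
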